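/- Let $u^*$ be the minimizer of $\frac{1}{2}\|u - \tilde\theta\|_2^2 + \lambda \|u - u_0\|_2$ over $u \in \mathbb{R}^d$, with $\lambda \geq 0$. Then for any true parameter $\theta \in \mathbb{R}^d$, $\|u^* - \theta\|_2 \leq \|\tilde\theta - \theta\|_2 + \min\{\lambda, \|\tilde\theta - u_0\|_2\}$ and also $\|u^* - \theta\|_2 \leq \|u_0 - \theta\|_2 + \max(\|\tilde\theta - u_0\|_2 - \lambda, 0)$. -/

import Mathlib

set_option maxHeartbeats 1000000


open scoped Classical
open scoped RealInnerProductSpace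

/-- Robustness–fusion tradeoff of block soft-thresholding: if `u*` minimizes
`u ↦ ½‖u - θ̃‖² + λ‖u - u₀‖` (with `λ ≥ 0`), then for any `θ`,
`‖u* - θ‖ ≤ ‖θ̃ - θ‖ + min(λ, ‖θ̃ - u₀‖)` and
`‖u* - θ‖ ≤ ‖u₀ - θ‖ + max(‖θ̃ - u₀‖ - λ, 0)`. -/
theorem block_soft_thresholding_error_bounds
    {d : ℕ} (lam : ℝ) (hlam : 0 ≤ lam)
    (u₀ θtilde : EuclideanSpace ℝ (Fin d))
    (ustar : EuclideanSpace ℝ (Fin d))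
    (hustar : ∀ u : EuclideanSpace ℝ (Fin d),
      (1 / 2) * ‖ustar - θtilde‖ ^ 2 + lam * ‖ustar - u₀‖ ≤
        (1 / 2) * ‖u - θtilde‖ ^ 2 + lam * ‖u - u₀‖) :
    ∀ θ : EuclideanSpace ℝ (Fin d),
      ‖ustar - θ‖ ≤ ‖θtilde - θ‖ + min lam ‖θtilde - u₀‖ ∧
      ‖ustar - θ‖ ≤ ‖u₀ - θ‖ + max (‖θtilde - u₀‖ - lam) 0 := by
  set w : EuclideanSpace ℝ (Fin d) := ustar - θtilde with hw
  set v : EuclideanSpace ℝ (Fin d) := u₀ - ustar with hv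
  set a : ℝ := ‖ustar - u₀‖ with ha
  set b : ℝ := ‖θtilde - u₀‖ with hb
  have ha0 : 0 ≤ a := norm_nonneg _
  have hb0 : 0 ≤ b := norm_nonneg _
  have hva : ‖v‖ = a := by rw [hv, ha, norm_sub_rev]
  -- variational inequality
  have key : ∀ u : EuclideanSpace ℝ (Fin d),
      lam * (a - ‖u - u₀‖) ≤ ⟪w, u - ustar⟫ := by
    intro u
    by_cases hu : u = ustar
    · simp [hu, ha]
    refine le_of_forall_pos_le_add ?_
    intro ε hε
    set h : EuclideanSpace ℝ (Fin d) := u - ustar with hh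
    have hh0 : h ≠ 0 := sub_ne_zero.mpr hu
    have hhn : 0 < ‖h‖ ^ 2 := pow_pos (norm_pos_iff.mpr hh0) 2
    set t : ℝ := min 1 (ε / ‖h‖ ^ 2) with htdef
    have ht0 : 0 < t := lt_min one_pos (div_pos hε hhn)
    have ht1 : t ≤ 1 := min_le_left _ _
    have htε : t * ‖h‖ ^ 2 ≤ ε := by
      have : t ≤ ε / ‖h‖ ^ 2 := min_le_right _ _
      calc t * ‖h‖ ^ 2 ≤ (ε / ‖h‖ ^ 2) * ‖h‖ ^ 2 := by
            exact mul_le_mul_of_nonneg_right this (le_of_lt hhn)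
        _ = ε := by field_simp
    have hmin := hustar (ustar + t • h)
    have e1 : ustar + t • h - θtilde = w + t • h := by
      rw [hw]; abel
    have e2 : ‖w + t • h‖ ^ 2 = ‖w‖ ^ 2 + 2 * (t * ⟪w, h⟫) + t ^ 2 * ‖h‖ ^ 2 := by
      rw [norm_add_sq_real, real_inner_smul_right, norm_smul]
      rw [Real.norm_eq_abs, abs_of_pos ht0, mul_pow]
    have e3 : ustar + t • h - u₀ = (1 - t) • (ustar - u₀) + t • (u - u₀) := by
      rw [hh]
      module
    have e4 : ‖ustar + t • h - u₀‖ ≤ (1 - t) * a + t * ‖u - u₀‖ := by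
      rw [e3]
      calc ‖(1 - t) • (ustar - u₀) + t • (u - u₀)‖
          ≤ ‖(1 - t) • (ustar - u₀)‖ + ‖t • (u - u₀)‖ := norm_add_le _ _
        _ = (1 - t) * a + t * ‖u - u₀‖ := by
            rw [norm_smul, norm_smul, Real.norm_eq_abs, Real.norm_eq_abs,
              abs_of_nonneg (by linarith), abs_of_pos ht0, ha]
    rw [e1] at hmin
    have hmin2 : (1 / 2 : ℝ) * ‖w‖ ^ 2 + lam * a ≤
        (1 / 2) * (‖w‖ ^ 2 + 2 * (t * ⟪w, h⟫) + t ^ 2 * ‖h‖ ^ 2)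
          + lam * ((1 - t) * a + t * ‖u - u₀‖) := by
      calc (1 / 2 : ℝ) * ‖w‖ ^ 2 + lam * a
          ≤ (1 / 2) * ‖w + t • h‖ ^ 2 + lam * ‖ustar + t • h - u₀‖ := hmin
        _ ≤ _ := by
            rw [e2]
            exact add_le_add le_rfl (mul_le_mul_of_nonneg_left e4 hlam)
    -- divide by t
    have hdiv : lam * (a - ‖u - u₀‖) ≤ ⟪w, h⟫ + (1 / 2) * (t * ‖h‖ ^ 2) := by
      have h5 : t * (lam * (a - ‖u - u₀‖)) ≤ t * (⟪w, h⟫ + (1 / 2) * (t * ‖h‖ ^ 2)) := by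
        nlinarith [hmin2]
      exact le_of_mul_le_mul_left h5 ht0
    calc lam * (a - ‖u - u₀‖) ≤ ⟪w, h⟫ + (1 / 2) * (t * ‖h‖ ^ 2) := hdiv
      _ ≤ ⟪w, h⟫ + ε := by nlinarith [htε]
  -- consequences
  have k1 : ‖w‖ ^ 2 ≤ lam * (b - a) := by
    have := key θtilde
    have e : θtilde - ustar = -w := by rw [hw]; abel
    rw [e, inner_neg_right, real_inner_self_eq_norm_sq] at this
    rw [hb]
    linarith
  have k2 : lam * a ≤ ⟪w, v⟫ := by
    have := key u₀
    simpa [hv] using this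
  have hba : b - a ≤ ‖w‖ := by
    have h1 : ‖θtilde - u₀‖ - ‖ustar - u₀‖ ≤ ‖(θtilde - u₀) - (ustar - u₀)‖ :=
      norm_sub_norm_le _ _
    have e : (θtilde - u₀) - (ustar - u₀) = -w := by rw [hw]; abel
    rw [e, norm_neg] at h1
    rw [ha, hb]
    linarith
  have hwlam : ‖w‖ ≤ lam := by
    nlinarith [norm_nonneg w, k1, hba, hlam]
  have hwb : ‖w‖ ≤ b := by
    have := hustar u₀
    have e : ‖u₀ - θtilde‖ = b := by rw [hb, norm_sub_rev]
    rw [e] at this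
    simp only [sub_self, norm_zero, mul_zero, add_zero] at this
    nlinarith [norm_nonneg w, hb0, mul_nonneg hlam ha0]
  have hamax : a ≤ max (b - lam) 0 := by
    rcases eq_or_lt_of_le ha0 with h0 | h0
    · rw [← h0]; exact le_max_right _ _
    · have hcs : ⟪w, v⟫ ≤ ‖w‖ * a := by
        have := real_inner_le_norm w v
        rw [hva] at this; exact this
      have hwge : lam ≤ ‖w‖ := by
        have : lam * a ≤ ‖w‖ * a := le_trans k2 hcs
        exact le_of_mul_le_mul_right this h0
      have eb : b = ‖w + v‖ := by
        have e : w + v = -(θtilde - u₀) := by rw [hw, hv]; abel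
        rw [e, norm_neg, hb]
      have eb2 : b ^ 2 = ‖w‖ ^ 2 + 2 * ⟪w, v⟫ + a ^ 2 := by
        rw [eb, norm_add_sq_real, hva]
      have hblam : lam + a ≤ b := by
        nlinarith [hb0, mul_nonneg hlam ha0]
      have : a ≤ b - lam := by linarith
      exact le_trans this (le_max_left _ _)
  intro θ
  constructor
  · have tri : ‖ustar - θ‖ ≤ ‖w‖ + ‖θtilde - θ‖ := by
      have e : ustar - θ = w + (θtilde - θ) := by rw [hw]; abel
      rw [e]; exact norm_add_le _ _
    have : ‖w‖ ≤ min lam b := le_min hwlam hwb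
    linarith
  · have tri : ‖ustar - θ‖ ≤ a + ‖u₀ - θ‖ := by
      have e : ustar - θ = (ustar - u₀) + (u₀ - θ) := by abel
      rw [e, ha]; exact norm_add_le _ _
    linarith
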